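/- Let F⃗ be a directed cycle on vertex set C of size L with all edges consistently oriented and uniform weight w, with directed Laplacian L_F = w(I - P) for a cyclic permutation matrix P. Let G be a graph containing C with undirected Laplacian L_G, and suppose every pair u,v ∈ C satisfies w·b_{uv}ᵀ L_G⁺ b_{uv} ≤ (L-1)ρ. Then L_Fᵀ L_G⁺ L_F ⪯ O(L²ρ)·L_C, where L_C = (w/2)(2I - P - Pᵀ) is the undirected cycle Laplacian. -/

import Mathlib

/-!
Write `x_k = x (c k)` and `b_k = e_{c k} - e_{c 0}`. The coefficients of `L_F x` on the cycle sum
to zero, so cyclic summation by parts gives `L_F x = ∑ₖ w (x_{k+1} - x_k) b_{k+1}`. The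
pseudoinverse `L_G⁺` is symmetric (by uniqueness of the pseudoinverse), hence PSD as
`L_G⁺ = L_G⁺ᵀ L_G L_G⁺`, and Cauchy–Schwarz for its quadratic form gives
`(L_F x)ᵀ L_G⁺ (L_F x) ≤ L ∑ₖ w² (x_{k+1} - x_k)² b_{k+1}ᵀ L_G⁺ b_{k+1}
  ≤ L (L - 1) ρ w ∑ₖ (x_{k+1} - x_k)² = 2 L (L - 1) ρ · xᵀ L_C x`, so `κ = 2` works.
-/

open Matrix

def bv {n : ℕ} (u v : Fin n) : Fin n → ℝ := Pi.single u 1 - Pi.single v 1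

def MoorePenrose {n : Type*} [Fintype n] (L Lp : Matrix n n ℝ) : Prop :=
  L * Lp * L = L ∧ Lp * L * Lp = Lp ∧ (L * Lp)ᵀ = L * Lp ∧ (Lp * L)ᵀ = Lp * L

/-- Directed Laplacian (`D - Aᵀ`) of a single directed edge `u → v` of weight `w`. -/
def dirLap {n : ℕ} (u v : Fin n) (w : ℝ) : Matrix (Fin n) (Fin n) ℝ :=
  w • Matrix.vecMulVec (bv u v) (Pi.single u 1)

namespace MoorePenrose

variable {n : Type*} [Fintype n] {A X Y : Matrix n n ℝ}

theorem transpose (h : MoorePenrose A X) : MoorePenrose Aᵀ Xᵀ := by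
  obtain ⟨h1, h2, h3, h4⟩ := h
  refine ⟨?_, ?_, ?_, ?_⟩
  · simpa [transpose_mul, Matrix.mul_assoc] using congrArg Matrix.transpose h1
  · simpa [transpose_mul, Matrix.mul_assoc] using congrArg Matrix.transpose h2
  · rw [← transpose_mul, h4, h4]
  · rw [← transpose_mul, h3, h3]

theorem unique (hX : MoorePenrose A X) (hY : MoorePenrose A Y) : X = Y := by
  obtain ⟨hX1, hX2, hX3, hX4⟩ := hX
  obtain ⟨hY1, hY2, hY3, hY4⟩ := hY
  have hXA : X * A = Y * A :=
    calc X * A = (X * (A * Y * A))ᵀ := by rw [hY1, hX4]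
      _ = ((X * A) * (Y * A))ᵀ := by simp only [Matrix.mul_assoc]
      _ = (Y * A) * (X * A) := by rw [transpose_mul, hX4, hY4]
      _ = Y * A := by rw [Matrix.mul_assoc, ← Matrix.mul_assoc A, hX1]
  have hAX : A * X = A * Y :=
    calc A * X = ((A * Y * A) * X)ᵀ := by rw [hY1, hX3]
      _ = ((A * Y) * (A * X))ᵀ := by simp only [Matrix.mul_assoc]
      _ = (A * X) * (A * Y) := by rw [transpose_mul, hX3, hY3]
      _ = A * Y := by rw [← Matrix.mul_assoc, hX1]
  calc X = X * A * X := hX2.symm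
    _ = Y * A * Y := by rw [Matrix.mul_assoc, hAX, ← Matrix.mul_assoc, hXA]
    _ = Y := hY2

theorem transpose_eq_self (hA : Aᵀ = A) (hX : MoorePenrose A X) : Xᵀ = X :=
  (hA ▸ hX.transpose).unique hX

theorem posSemidef (hA : A.PosSemidef) (hX : MoorePenrose A X) : X.PosSemidef := by
  have hXT : Xᵀ = X := hX.transpose_eq_self hA.isHermitian.eq
  have h := hA.conjTranspose_mul_mul_same X
  rwa [conjTranspose_eq_transpose_of_trivial, hXT, hX.2.1] at h

end MoorePenrose

theorem Matrix.dotProduct_transpose_mul_mul_mulVec {m n α : Type*} [Fintype m] [Fintype n]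
    [CommSemiring α] (B : Matrix m n α) (Q : Matrix m m α) (x : n → α) :
    x ⬝ᵥ ((Bᵀ * Q * B) *ᵥ x) = (B *ᵥ x) ⬝ᵥ (Q *ᵥ (B *ᵥ x)) := by
  rw [← mulVec_mulVec, ← mulVec_mulVec, dotProduct_mulVec x, vecMul_transpose]

theorem Matrix.PosSemidef.two_mul_dotProduct_mulVec_le {n : Type*} [Fintype n]
    {Q : Matrix n n ℝ} (hQ : Q.PosSemidef) (a b : n → ℝ) :
    2 * (a ⬝ᵥ (Q *ᵥ b)) ≤ a ⬝ᵥ (Q *ᵥ a) + b ⬝ᵥ (Q *ᵥ b) := by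
  have hsymm : b ⬝ᵥ (Q *ᵥ a) = a ⬝ᵥ (Q *ᵥ b) := by
    rw [dotProduct_mulVec, ← mulVec_transpose, dotProduct_comm,
      ← conjTranspose_eq_transpose_of_trivial, hQ.isHermitian.eq]
  have h := hQ.dotProduct_mulVec_nonneg (a - b)
  simp only [star_trivial, mulVec_sub, dotProduct_sub, sub_dotProduct] at h
  linarith

theorem Matrix.PosSemidef.sum_dotProduct_mulVec_sum_le {n ι : Type*} [Fintype n] [Fintype ι]
    {Q : Matrix n n ℝ} (hQ : Q.PosSemidef) (v : ι → n → ℝ) :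
    (∑ k, v k) ⬝ᵥ (Q *ᵥ ∑ k, v k) ≤ Fintype.card ι * ∑ k, v k ⬝ᵥ (Q *ᵥ v k) :=
  calc (∑ k, v k) ⬝ᵥ (Q *ᵥ ∑ k, v k) = ∑ j, ∑ k, v j ⬝ᵥ (Q *ᵥ v k) := by
        simp only [mulVec_sum, dotProduct_sum, sum_dotProduct]
        exact Finset.sum_comm
    _ ≤ ∑ j, ∑ k, (v j ⬝ᵥ (Q *ᵥ v j) + v k ⬝ᵥ (Q *ᵥ v k)) / 2 := by
        gcongr with j _ k _
        linarith [hQ.two_mul_dotProduct_mulVec_le (v j) (v k)]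
    _ = Fintype.card ι * ∑ k, v k ⬝ᵥ (Q *ᵥ v k) := by
        simp only [← Finset.sum_div, Finset.sum_add_distrib, Finset.sum_const, Finset.card_univ,
          nsmul_eq_mul, ← Finset.mul_sum]
        ring

theorem Fintype.sum_smul_sub_add_eq {G R M : Type*} [AddGroup G] [Fintype G] [Ring R]
    [AddCommGroup M] [Module R M] (a : G → R) (f : G → M) (g : G) :
    ∑ k, a k • (f k - f (k + g)) = ∑ k, (a (k + g) - a k) • f (k + g) := by
  simp only [smul_sub, sub_smul, Finset.sum_sub_distrib]
  rw [← Equiv.sum_comp (Equiv.addRight g) (fun k => a k • f k)]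
  rfl

theorem bv_dotProduct {n : ℕ} (u v : Fin n) (x : Fin n → ℝ) : bv u v ⬝ᵥ x = x u - x v := by
  simp [bv, sub_dotProduct, single_dotProduct]

theorem bv_sub_bv {n : ℕ} (u v t : Fin n) : bv u t - bv v t = bv u v := by
  simp only [bv]
  abel

theorem dirLap_mulVec {n : ℕ} (u v : Fin n) (w : ℝ) (x : Fin n → ℝ) :
    dirLap u v w *ᵥ x = (w * x u) • bv u v := by
  ext i
  simp only [dirLap, smul_mulVec, vecMulVec_mulVec, single_dotProduct, one_mul, op_smul_eq_smul,
    Pi.smul_apply, smul_eq_mul]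
  ring

noncomputable section Cycle

variable {n L : ℕ} [NeZero L] (c : Fin L → Fin n) (w : ℝ)

def dirCycleLap : Matrix (Fin n) (Fin n) ℝ := ∑ k, dirLap (c k) (c (k + 1)) w

def cycleLap : Matrix (Fin n) (Fin n) ℝ :=
  ∑ k, (w / 2) • vecMulVec (bv (c k) (c (k + 1))) (bv (c k) (c (k + 1)))

theorem dirCycleLap_mulVec (x : Fin n → ℝ) :
    dirCycleLap c w *ᵥ x = ∑ k, (w * (x (c (k + 1)) - x (c k))) • bv (c (k + 1)) (c 0) := by
  calc dirCycleLap c w *ᵥ x = ∑ k, (w * x (c k)) • (bv (c k) (c 0) - bv (c (k + 1)) (c 0)) := by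
        simp only [dirCycleLap, sum_mulVec, dirLap_mulVec, bv_sub_bv]
    _ = _ := by simp only [Fintype.sum_smul_sub_add_eq, mul_sub]

theorem cycleLap_posSemidef (hw : 0 ≤ w) : (cycleLap c w).PosSemidef := by
  refine posSemidef_sum _ fun k _ => PosSemidef.smul ?_ (by positivity)
  simpa using posSemidef_vecMulVec_self_star (bv (c k) (c (k + 1)))

theorem dotProduct_cycleLap_mulVec (x : Fin n → ℝ) :
    x ⬝ᵥ (cycleLap c w *ᵥ x) = w / 2 * ∑ k, (x (c (k + 1)) - x (c k)) ^ 2 := by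
  rw [cycleLap, sum_mulVec, dotProduct_sum, Finset.mul_sum]
  refine Finset.sum_congr rfl fun k _ => ?_
  rw [smul_mulVec, dotProduct_smul, dotProduct_mulVec, vecMul_vecMulVec, smul_dotProduct,
    dotProduct_comm x, bv_dotProduct, smul_eq_mul, smul_eq_mul]
  ring

theorem dirCycleLap_dotProduct_mulVec_le {Q : Matrix (Fin n) (Fin n) ℝ} (hQ : Q.PosSemidef)
    (hw : 0 ≤ w) {R : ℝ} (hR : ∀ k, w * (bv (c k) (c 0) ⬝ᵥ (Q *ᵥ bv (c k) (c 0))) ≤ R)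
    (x : Fin n → ℝ) :
    (dirCycleLap c w *ᵥ x) ⬝ᵥ (Q *ᵥ (dirCycleLap c w *ᵥ x))
      ≤ L * R * (w * ∑ k, (x (c (k + 1)) - x (c k)) ^ 2) := by
  rw [dirCycleLap_mulVec]
  refine (hQ.sum_dotProduct_mulVec_sum_le _).trans ?_
  calc _ ≤ L * ∑ k, w * (x (c (k + 1)) - x (c k)) ^ 2 * R := by
        rw [Fintype.card_fin]
        gcongr with k _
        simp only [mulVec_smul, dotProduct_smul, smul_dotProduct, smul_eq_mul]
        calc _ = w * (x (c (k + 1)) - x (c k)) ^ 2 *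
              (w * (bv (c (k + 1)) (c 0) ⬝ᵥ (Q *ᵥ bv (c (k + 1)) (c 0)))) := by ring
          _ ≤ _ := by gcongr; exact hR (k + 1)
    _ = _ := by rw [← Finset.sum_mul, ← Finset.mul_sum]; ring

end Cycle

/-- Let `F⃗` be a consistently oriented directed cycle on `L` vertices of a connected graph
`G` with uniform weight `w`, with directed Laplacian `L_F`, and suppose every pair `u, v`
of cycle vertices satisfies `w·b_{uv}ᵀ L_G⁺ b_{uv} ≤ (L-1)·ρ`.  Then
`L_Fᵀ L_G⁺ L_F ⪯ O(L²ρ)·L_C` where `L_C` is the undirected cycle Laplacian: there is an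
absolute constant `κ > 0` such that `(κ L² ρ)·L_C − L_Fᵀ L_G⁺ L_F` is PSD. -/
theorem stmt_8 :
    ∃ κ : ℝ, 0 < κ ∧
      ∀ (n L : ℕ) [NeZero L] (c : Fin L → Fin n), Function.Injective c →
      ∀ (w ρ : ℝ), 0 < w → 0 ≤ ρ →
      ∀ (LG : Matrix (Fin n) (Fin n) ℝ), LG.PosSemidef →
      (∀ x : Fin n → ℝ, LG *ᵥ x = 0 → ∃ t : ℝ, x = fun _ => t) →
      ∀ (Lp : Matrix (Fin n) (Fin n) ℝ), MoorePenrose LG Lp →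
      (∀ k l : Fin L,
        w * (bv (c k) (c l) ⬝ᵥ (Lp *ᵥ bv (c k) (c l))) ≤ ((L : ℝ) - 1) * ρ) →
      ∀ (LF LC : Matrix (Fin n) (Fin n) ℝ),
        LF = ∑ k : Fin L, dirLap (c k) (c (k + 1)) w →
        LC = ∑ k : Fin L, (w / 2) •
          Matrix.vecMulVec (bv (c k) (c (k + 1))) (bv (c k) (c (k + 1))) →
        ((κ * (L : ℝ) ^ 2 * ρ) • LC - LFᵀ * Lp * LF).PosSemidef := by
  refine ⟨2, two_pos, fun n L _ c _ w ρ hw hρ LG hLG _ Lp hLp hres LF LC hLF hLC => ?_⟩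
  obtain rfl : LF = dirCycleLap c w := hLF
  obtain rfl : LC = cycleLap c w := hLC
  have hLp_psd := hLp.posSemidef hLG
  have hLC_psd := (cycleLap_posSemidef c w hw.le).smul (by positivity : 0 ≤ 2 * (L : ℝ) ^ 2 * ρ)
  have hLF_psd := hLp_psd.conjTranspose_mul_mul_same (dirCycleLap c w)
  rw [conjTranspose_eq_transpose_of_trivial] at hLF_psd
  refine posSemidef_iff_dotProduct_mulVec.mpr
    ⟨hLC_psd.isHermitian.sub hLF_psd.isHermitian, fun x => ?_⟩
  have hdir := dirCycleLap_dotProduct_mulVec_le c w hLp_psd hw.le (fun k => hres k 0) x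
  rw [star_trivial, sub_mulVec, dotProduct_sub, smul_mulVec, dotProduct_smul, smul_eq_mul,
    dotProduct_cycleLap_mulVec, dotProduct_transpose_mul_mul_mulVec]
  have hslack : 0 ≤ L * ρ * (w * ∑ k, (x (c (k + 1)) - x (c k)) ^ 2) := by positivity
  linear_combination hdir + hslack
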